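/- Let A be a skew-symmetric N×N complex matrix (A_{ij} = -A_{ji}) and a a vector in ℂ^N. Then the determinant of the 'quasi-skew symmetric' matrix with entries A_{ij} - a_i·a_j equals the determinant of A when N is even, i.e. det(A - a aᵀ) = det(A) for N even. -/

import Mathlib

open Matrix Polynomial

lemma skew_quadratic_zero {N : ℕ} (M : Matrix (Fin N) (Fin N) ℂ) (hM : Mᵀ = -M)
    (a : Fin N → ℂ) : a ⬝ᵥ M *ᵥ a = 0 := by
  have h : a ⬝ᵥ M *ᵥ a = -(a ⬝ᵥ M *ᵥ a) := by
    conv_lhs => rw [dotProduct_mulVec, ← mulVec_transpose, hM, neg_mulVec,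
      neg_dotProduct, dotProduct_comm]
  linear_combination h / 2

lemma det_quasi_skew_of_isUnit {N : ℕ} (M : Matrix (Fin N) (Fin N) ℂ) (hM : Mᵀ = -M)
    (hU : IsUnit M.det) (a : Fin N → ℂ) :
    (M - Matrix.vecMulVec a a).det = M.det := by
  have hinv : (M⁻¹)ᵀ = -(M⁻¹) := by
    rw [transpose_nonsing_inv, hM]
    refine inv_eq_right_inv ?_
    rw [Matrix.neg_mul, Matrix.mul_neg, neg_neg,
      mul_nonsing_inv _ hU]
  have h1 : M - vecMulVec a a = M + replicateCol Unit (-a) * replicateRow Unit a := by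
    rw [vecMulVec_eq Unit a a, sub_eq_add_neg]
    congr 1
    ext i j
    simp [Matrix.mul_apply, replicateCol, replicateRow]
  rw [h1, det_add_replicateCol_mul_replicateRow hU]
  have h2 : (1 + replicateRow Unit a * M⁻¹ * replicateCol Unit (-a)).det = 1 := by
    rw [det_unique, Matrix.add_apply, Matrix.one_apply_eq]
    have hz := skew_quadratic_zero M⁻¹ hinv a
    have : (replicateRow Unit a * M⁻¹ * replicateCol Unit (-a)) default default
        = -(a ⬝ᵥ M⁻¹ *ᵥ a) := by
      simp only [Matrix.mul_apply, replicateRow, replicateCol, dotProduct, mulVec, of_apply,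
        Finset.univ_unique, Finset.sum_const, Finset.card_singleton, one_smul]
      rw [← Finset.sum_neg_distrib]
      rw [show (∑ x : Fin N, (∑ x_1 : Fin N, a x_1 * M⁻¹ x_1 x) * (-a) x)
          = ∑ x : Fin N, ∑ x_1 : Fin N, a x_1 * M⁻¹ x_1 x * (-a) x from
        Finset.sum_congr rfl fun x _ => Finset.sum_mul ..]
      rw [Finset.sum_comm]
      refine Finset.sum_congr rfl fun i _ => ?_
      rw [Finset.mul_sum, ← Finset.sum_neg_distrib]
      refine Finset.sum_congr rfl fun j _ => ?_
      simp only [Pi.neg_apply]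
      ring
    rw [this, hz, neg_zero, add_zero]
  rw [h2, mul_one]

lemma eval_charpoly' {n : ℕ} (M : Matrix (Fin n) (Fin n) ℂ) (t : ℂ) :
    Polynomial.eval t M.charpoly = (t • (1 : Matrix (Fin n) (Fin n) ℂ) - M).det := by
  have h := (Polynomial.evalRingHom t).map_det (charmatrix M)
  rw [Matrix.charpoly, show Polynomial.eval t (charmatrix M).det
    = (Polynomial.evalRingHom t) (charmatrix M).det from rfl, h]
  congr 1
  ext i j
  by_cases h : i = j <;>
    simp [charmatrix_apply, Matrix.one_apply, Matrix.diagonal, h]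

theorem det_quasi_skew_even (N : ℕ) (hN : Even N)
    (A : Matrix (Fin N) (Fin N) ℂ) (hA : Aᵀ = -A) (a : Fin N → ℂ) :
    (A - Matrix.vecMulVec a a).det = A.det := by
  obtain ⟨m, hm⟩ := hN
  set e : Fin m ⊕ Fin m ≃ Fin N := finSumFinEquiv.trans (finCongr hm.symm) with he
  set J : Matrix (Fin m ⊕ Fin m) (Fin m ⊕ Fin m) ℂ := fromBlocks 0 1 (-1) 0 with hJ
  set S : Matrix (Fin N) (Fin N) ℂ := reindex e e J with hS
  have hJK : J * fromBlocks 0 (-1) 1 0 = 1 := by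
    rw [hJ, fromBlocks_multiply]
    simp [← fromBlocks_one]
  have hSskew : Sᵀ = -S := by
    have hJt : Jᵀ = -J := by
      rw [hJ, fromBlocks_transpose]
      ext (i | i) (j | j) <;> simp [fromBlocks]
    rw [hS, transpose_reindex, hJt]
    simp [Matrix.reindex_apply, Matrix.submatrix_neg]
  have hSdet : IsUnit S.det := by
    rw [hS, det_reindex_self]
    exact Matrix.isUnit_det_of_right_inverse hJK
  -- for all but finitely many t, A + t • S is invertible
  have key : ∀ t : ℂ, Polynomial.eval t (-(S⁻¹ * A)).charpoly ≠ 0 →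
      (A + t • S - Matrix.vecMulVec a a).det = (A + t • S).det := by
    intro t ht
    have hfact : A + t • S = S * (t • 1 - -(S⁻¹ * A)) := by
      rw [sub_neg_eq_add, Matrix.mul_add, mul_smul_comm, Matrix.mul_one,
        Matrix.mul_nonsing_inv_cancel_left _ _ hSdet, add_comm]
    have hdet : (A + t • S).det = S.det * Polynomial.eval t (-(S⁻¹ * A)).charpoly := by
      rw [hfact, det_mul, eval_charpoly']
    have hU : IsUnit (A + t • S).det := by
      rw [hdet, isUnit_iff_ne_zero]
      exact mul_ne_zero (isUnit_iff_ne_zero.mp hSdet) ht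
    have hskew : (A + t • S)ᵀ = -(A + t • S) := by
      rw [transpose_add, transpose_smul, hA, hSskew, smul_neg, neg_add]
    exact det_quasi_skew_of_isUnit _ hskew hU a
  -- polynomial identity
  set P : Matrix (Fin N) (Fin N) (Polynomial ℂ) :=
    A.map Polynomial.C + (Polynomial.X : Polynomial ℂ) • S.map Polynomial.C with hP
  set p : Polynomial ℂ :=
    (P - Matrix.vecMulVec (fun i => Polynomial.C (a i)) (fun i => Polynomial.C (a i))).det
    with hp
  set q : Polynomial ℂ := P.det with hq
  have hevalp : ∀ t : ℂ, Polynomial.eval t p = (A + t • S - Matrix.vecMulVec a a).det := by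
    intro t
    rw [hp, show ∀ r : Polynomial ℂ, Polynomial.eval t r = (Polynomial.evalRingHom t) r
      from fun _ => rfl, (Polynomial.evalRingHom t).map_det]
    congr 1
    ext i j
    simp [hP, Matrix.vecMulVec_apply]
    ring
  have hevalq : ∀ t : ℂ, Polynomial.eval t q = (A + t • S).det := by
    intro t
    rw [hq, show ∀ r : Polynomial ℂ, Polynomial.eval t r = (Polynomial.evalRingHom t) r
      from fun _ => rfl, (Polynomial.evalRingHom t).map_det]
    congr 1
    ext i j
    simp [hP]
    ring
  have hpq : p = q := by
    apply Polynomial.eq_of_infinite_eval_eq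
    have hchar : (-(S⁻¹ * A)).charpoly ≠ 0 :=
      (Matrix.charpoly_monic _).ne_zero
    have hsub : {t : ℂ | Polynomial.IsRoot (-(S⁻¹ * A)).charpoly t}ᶜ ⊆
        {t : ℂ | Polynomial.eval t p = Polynomial.eval t q} := by
      intro t ht
      simp only [Set.mem_compl_iff, Set.mem_setOf_eq, Polynomial.IsRoot] at ht ⊢
      rw [hevalp, hevalq]
      exact key t ht
    exact Set.Infinite.mono hsub
      ((Polynomial.finite_setOf_isRoot hchar).infinite_compl)
  have h0p := hevalp 0
  have h0q := hevalq 0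
  rw [hpq, hevalq 0] at h0p
  simpa using h0p.symm
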